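/- (Shifted scaling) Let A ∈ ℝ^{m×n} have full row rank, let x ∈ ℝⁿ with x > 0, let β ≤ 1/4, and let Δx ∈ ℝⁿ satisfy ‖X⁻¹Δx‖ ≤ β. Write W = diag(x + Δx) (so x + Δx > 0). Then for all v ∈ ℝⁿ, ‖[ X⁻¹W · P_{AW} · X⁻¹W − P_{AX} ] v‖ ≤ 3β ‖P_{AX} v‖. -/

import Mathlib

open Matrix

noncomputable def euclNorm {ι : Type*} [Fintype ι] (v : ι → ℝ) : ℝ :=
  Real.sqrt (∑ i, (v i) ^ 2)

noncomputable def opNorm {ι κ : Type*} [Fintype ι] [Fintype κ]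
    (M : Matrix ι κ ℝ) : ℝ :=
  sSup {r : ℝ | ∃ v : κ → ℝ, euclNorm v ≤ 1 ∧ r = euclNorm (M *ᵥ v)}

noncomputable def lambdaMin {ι : Type*} [Fintype ι] (M : Matrix ι ι ℝ) : ℝ :=
  sInf {r : ℝ | ∃ v : ι → ℝ, euclNorm v = 1 ∧ r = v ⬝ᵥ (M *ᵥ v)}

noncomputable def lambdaMax {ι : Type*} [Fintype ι] (M : Matrix ι ι ℝ) : ℝ :=
  sSup {r : ℝ | ∃ v : ι → ℝ, euclNorm v = 1 ∧ r = v ⬝ᵥ (M *ᵥ v)}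

noncomputable def condNum {ι : Type*} [Fintype ι] (M : Matrix ι ι ℝ) : ℝ :=
  lambdaMax M / lambdaMin M

noncomputable def gradProj {m n : ℕ} (B : Matrix (Fin m) (Fin n) ℝ) :
    Matrix (Fin n) (Fin n) ℝ :=
  1 - Bᵀ * (B * Bᵀ)⁻¹ * B

/-- The proximity measure `δ(x, μ) = ‖P_{AX}((1/μ) X c - e)‖`. -/
noncomputable def prox {m n : ℕ} (A : Matrix (Fin m) (Fin n) ℝ)
    (c x : Fin n → ℝ) (μ : ℝ) : ℝ :=
  euclNorm (gradProj (A * Matrix.diagonal x) *ᵥ (μ⁻¹ • (Matrix.diagonal x *ᵥ c) - 1))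

/-- The proximity measure as `min_{(y,s) ∈ F_d} ‖(1/μ) X s - e‖`. -/
noncomputable def proxMin {m n : ℕ} (A : Matrix (Fin m) (Fin n) ℝ)
    (c x : Fin n → ℝ) (μ : ℝ) : ℝ :=
  sInf {r : ℝ | ∃ (y : Fin m → ℝ) (s : Fin n → ℝ),
    Aᵀ *ᵥ y + s = c ∧ (∀ i, 0 ≤ s i) ∧
    r = euclNorm (μ⁻¹ • (Matrix.diagonal x *ᵥ s) - 1)}

/-- The primal normal matrix `A X² Aᵀ` is positive semidefinite. -/
theorem normalPSD {m n : ℕ} (A : Matrix (Fin m) (Fin n) ℝ) (x : Fin n → ℝ) :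
    (A * Matrix.diagonal x ^ 2 * Aᵀ).PosSemidef := by
  have h : A * Matrix.diagonal x ^ 2 * Aᵀ
      = (A * Matrix.diagonal x) * (A * Matrix.diagonal x)ᴴ := by
    rw [Matrix.conjTranspose_mul, Matrix.conjTranspose_eq_transpose_of_trivial,
      Matrix.conjTranspose_eq_transpose_of_trivial, Matrix.diagonal_transpose, pow_two,
      Matrix.mul_assoc, Matrix.mul_assoc, Matrix.mul_assoc]
  rw [h]
  exact Matrix.posSemidef_self_mul_conjTranspose _

/-!
Write `B = A X` and `D = X⁻¹ W`, so that `A W = B D`. Because `(B D)ᵀ = D Bᵀ` is annihilated by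
`P_{BD}`, the operator `D P_{BD} D - P_B` vanishes on the range of `Bᵀ` and only sees
`u = P_B v ∈ ker B`. There `D⁻¹ u ∈ ker (B D)` is fixed by `P_{BD}`, which gives
`(D P_{BD} D - P_B) v = D P_{BD} (D - D⁻¹) u`. The entries of `D` lie in `[1 - β, 1 + β]`, so
`‖D‖ ≤ 1 + β`, `‖D - D⁻¹‖ ≤ 3β / (1 + β)`, and `P_{BD}` is a contraction.
-/

section euclNorm

variable {ι : Type*} [Fintype ι]

lemma euclNorm_eq_sqrt_dotProduct (v : ι → ℝ) : euclNorm v = √(v ⬝ᵥ v) := by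
  simp only [euclNorm, dotProduct, sq]

lemma euclNorm_nonneg (v : ι → ℝ) : 0 ≤ euclNorm v := Real.sqrt_nonneg _

lemma abs_le_euclNorm (v : ι → ℝ) (i : ι) : |v i| ≤ euclNorm v := by
  rw [← Real.sqrt_sq_eq_abs]
  exact Real.sqrt_le_sqrt
    (Finset.single_le_sum (fun j _ => sq_nonneg (v j)) (Finset.mem_univ i))

lemma euclNorm_diagonal_mulVec_le [DecidableEq ι] {c : ι → ℝ} {M : ℝ} (hM : 0 ≤ M)
    (hc : ∀ i, |c i| ≤ M) (v : ι → ℝ) : euclNorm (diagonal c *ᵥ v) ≤ M * euclNorm v := by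
  have hsum : ∑ i, (c i * v i) ^ 2 ≤ M ^ 2 * ∑ i, v i ^ 2 := by
    rw [Finset.mul_sum]
    refine Finset.sum_le_sum fun i _ => ?_
    rw [mul_pow]
    exact mul_le_mul_of_nonneg_right (sq_le_sq' (abs_le.mp (hc i)).1 (abs_le.mp (hc i)).2)
      (sq_nonneg _)
  calc euclNorm (diagonal c *ᵥ v) = √(∑ i, (c i * v i) ^ 2) := by
        simp only [euclNorm, mulVec_diagonal]
    _ ≤ √(M ^ 2 * ∑ i, v i ^ 2) := Real.sqrt_le_sqrt hsum
    _ = M * euclNorm v := by rw [Real.sqrt_mul (sq_nonneg M), Real.sqrt_sq hM, euclNorm]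

lemma euclNorm_mulVec_le_of_isSymm {Q : Matrix ι ι ℝ} (hsymm : Q.IsSymm)
    (hidem : IsIdempotentElem Q) (z : ι → ℝ) : euclNorm (Q *ᵥ z) ≤ euclNorm z := by
  have hQz : (Q *ᵥ z) ⬝ᵥ (Q *ᵥ z) = z ⬝ᵥ (Q *ᵥ z) := by
    calc (Q *ᵥ z) ⬝ᵥ (Q *ᵥ z) = (z ᵥ* Qᵀ) ⬝ᵥ (Q *ᵥ z) := by rw [vecMul_transpose]
      _ = z ⬝ᵥ ((Qᵀ * Q) *ᵥ z) := by rw [← dotProduct_mulVec, mulVec_mulVec]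
      _ = z ⬝ᵥ (Q *ᵥ z) := by rw [hsymm.eq, hidem.eq]
  have hrest : 0 ≤ (z - Q *ᵥ z) ⬝ᵥ (z - Q *ᵥ z) :=
    Finset.sum_nonneg fun i _ => mul_self_nonneg _
  rw [euclNorm_eq_sqrt_dotProduct, euclNorm_eq_sqrt_dotProduct]
  refine Real.sqrt_le_sqrt ?_
  simp only [sub_dotProduct, dotProduct_sub, dotProduct_comm (Q *ᵥ z) z] at hrest
  linarith

end euclNorm

lemma isUnit_of_rank_eq_card {ι K : Type*} [Fintype ι] [DecidableEq ι] [Field K]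
    {M : Matrix ι ι K} (h : M.rank = Fintype.card ι) : IsUnit M := by
  have hrange : LinearMap.range M.mulVecLin = ⊤ :=
    Submodule.eq_top_of_finrank_eq (by rw [← Matrix.rank, h, Module.finrank_fintype_fun_eq_card])
  exact mulVec_surjective_iff_isUnit.mp (LinearMap.range_eq_top.mp hrange)

lemma isUnit_det_mul_transpose {m n : ℕ} {B : Matrix (Fin m) (Fin n) ℝ} (hB : B.rank = m) :
    IsUnit (B * Bᵀ).det :=
  isUnit_iff_isUnit_det _ |>.mp <| isUnit_of_rank_eq_card (by
    rw [rank_self_mul_transpose, hB, Fintype.card_fin])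

lemma rank_mul_diagonal {m n : ℕ} (B : Matrix (Fin m) (Fin n) ℝ) {d : Fin n → ℝ}
    (hd : ∀ i, d i ≠ 0) : (B * diagonal d).rank = B.rank :=
  rank_mul_eq_left_of_det_ne_zero _ _ (by
    rw [det_diagonal]
    exact Finset.prod_ne_zero_iff.mpr fun i _ => hd i)

section gradProj

variable {m n : ℕ} (B : Matrix (Fin m) (Fin n) ℝ)

lemma isSymm_gradProj : (gradProj B).IsSymm := by
  rw [IsSymm, gradProj, transpose_sub, transpose_one, transpose_mul, transpose_mul,
    transpose_transpose, transpose_nonsing_inv, transpose_mul, transpose_transpose,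
    Matrix.mul_assoc]

lemma gradProj_mulVec_of_mulVec_eq_zero {y : Fin n → ℝ} (hy : B *ᵥ y = 0) :
    gradProj B *ᵥ y = y := by
  rw [gradProj, sub_mulVec, one_mulVec, ← mulVec_mulVec, hy, mulVec_zero, sub_zero]

variable {B}

lemma mul_gradProj (hB : IsUnit (B * Bᵀ).det) : B * gradProj B = 0 := by
  rw [gradProj, Matrix.mul_sub, Matrix.mul_one, ← Matrix.mul_assoc, ← Matrix.mul_assoc,
    mul_nonsing_inv _ hB, Matrix.one_mul, sub_self]

lemma gradProj_mul_transpose (hB : IsUnit (B * Bᵀ).det) : gradProj B * Bᵀ = 0 := by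
  rw [gradProj, Matrix.sub_mul, Matrix.one_mul, Matrix.mul_assoc, Matrix.mul_assoc,
    nonsing_inv_mul _ hB, Matrix.mul_one, sub_self]

lemma isIdempotentElem_gradProj (hB : IsUnit (B * Bᵀ).det) : IsIdempotentElem (gradProj B) := by
  rw [IsIdempotentElem]
  nth_rewrite 2 [gradProj]
  rw [Matrix.mul_sub, Matrix.mul_one, ← Matrix.mul_assoc, ← Matrix.mul_assoc,
    gradProj_mul_transpose hB, Matrix.zero_mul, Matrix.zero_mul, sub_zero]

end gradProj

section scaling

variable {m n : ℕ} {B : Matrix (Fin m) (Fin n) ℝ} {d : Fin n → ℝ}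

lemma diagonal_gradProj_diagonal_mul_gradProj
    (hC : IsUnit ((B * diagonal d) * (B * diagonal d)ᵀ).det) :
    diagonal d * gradProj (B * diagonal d) * diagonal d * gradProj B
      = diagonal d * gradProj (B * diagonal d) * diagonal d := by
  have hCt : diagonal d * Bᵀ = (B * diagonal d)ᵀ := by rw [transpose_mul, diagonal_transpose]
  rw [gradProj.eq_1 B, Matrix.mul_sub, Matrix.mul_one, sub_eq_self]
  simp only [Matrix.mul_assoc]
  rw [← Matrix.mul_assoc (diagonal d) Bᵀ, hCt, ← Matrix.mul_assoc (gradProj _),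
    gradProj_mul_transpose hC, Matrix.zero_mul, Matrix.mul_zero]

/-- On `ker B`, rescaling by `D⁻¹` lands in `ker (B D)`, where `P_{BD}` is the identity. -/
lemma diagonal_gradProj_diagonal_mulVec (hd : ∀ i, d i ≠ 0) {u : Fin n → ℝ}
    (hu : B *ᵥ u = 0) :
    (diagonal d * gradProj (B * diagonal d) * diagonal d) *ᵥ u
      = u + diagonal d *ᵥ (gradProj (B * diagonal d) *ᵥ (diagonal (d - d⁻¹) *ᵥ u)) := by
  have hdd : (fun i => d i * d⁻¹ i) = fun _ => 1 := funext fun i => mul_inv_cancel₀ (hd i)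
  have hcancel : diagonal d *ᵥ (diagonal d⁻¹ *ᵥ u) = u := by
    rw [mulVec_mulVec, diagonal_mul_diagonal, hdd, diagonal_one, one_mulVec]
  have hfix : gradProj (B * diagonal d) *ᵥ (diagonal d⁻¹ *ᵥ u) = diagonal d⁻¹ *ᵥ u := by
    refine gradProj_mulVec_of_mulVec_eq_zero _ ?_
    rw [mulVec_mulVec, Matrix.mul_assoc, diagonal_mul_diagonal, hdd, diagonal_one,
      Matrix.mul_one, hu]
  have hsplit : diagonal d *ᵥ u = diagonal (d - d⁻¹) *ᵥ u + diagonal d⁻¹ *ᵥ u := by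
    simp only [← add_mulVec, diagonal_add, Pi.sub_apply, sub_add_cancel]
  rw [← mulVec_mulVec, ← mulVec_mulVec, hsplit, mulVec_add, hfix, mulVec_add, hcancel, add_comm]

lemma diagonal_gradProj_diagonal_sub_gradProj_mulVec (hB : IsUnit (B * Bᵀ).det)
    (hC : IsUnit ((B * diagonal d) * (B * diagonal d)ᵀ).det) (hd : ∀ i, d i ≠ 0)
    (v : Fin n → ℝ) :
    (diagonal d * gradProj (B * diagonal d) * diagonal d - gradProj B) *ᵥ v
      = diagonal d *ᵥ (gradProj (B * diagonal d) *ᵥ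
          (diagonal (d - d⁻¹) *ᵥ (gradProj B *ᵥ v))) := by
  have hu : B *ᵥ (gradProj B *ᵥ v) = 0 := by
    rw [mulVec_mulVec, mul_gradProj hB, zero_mulVec]
  rw [sub_mulVec, ← diagonal_gradProj_diagonal_mul_gradProj hC, ← mulVec_mulVec,
    diagonal_gradProj_diagonal_mulVec hd hu, add_sub_cancel_left]

end scaling

/-- The bound is chosen so that `(1 + β) * |t - t⁻¹| ≤ 3β`; it holds up to `β = 2 - √3`. -/
lemma abs_sub_inv_le {β t : ℝ} (hβ : β ≤ 1 / 4) (ht : |t - 1| ≤ β) :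
    |t - t⁻¹| ≤ 3 * β / (1 + β) := by
  obtain ⟨hlo, hhi⟩ := abs_le.mp ht
  have hβ0 : 0 ≤ β := (abs_nonneg _).trans ht
  have ht0 : 0 < t := by linarith
  have hβ1 : 0 < 1 + β := by linarith
  have hlo' : 0 ≤ t - 1 + β := by linarith
  have hhi' : 0 ≤ β - (t - 1) := by linarith
  rw [show t - t⁻¹ = (t ^ 2 - 1) / t by field_simp, abs_div, abs_of_pos ht0,
    div_le_div_iff₀ ht0 hβ1, ← abs_of_pos hβ1, ← abs_mul, abs_le]
  constructor
  · nlinarith [mul_nonneg hβ0 (by linarith : (0:ℝ) ≤ 1 - 4 * β),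
      mul_nonneg (mul_nonneg hlo' hlo') hβ1.le, mul_nonneg hlo' hβ0]
  · nlinarith [mul_nonneg (mul_nonneg hlo' hhi') hβ1.le,
      mul_nonneg hhi' (by linarith : (0:ℝ) ≤ 2 - β),
      mul_nonneg (mul_nonneg hβ0 hβ0) (by linarith : (0:ℝ) ≤ 1 - β)]

theorem euclNorm_diagonal_gradProj_diagonal_sub_gradProj_mulVec_le {m n : ℕ}
    {B : Matrix (Fin m) (Fin n) ℝ} (hB : B.rank = m) {β : ℝ} (hβ0 : 0 ≤ β) (hβ : β ≤ 1 / 4)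
    {d : Fin n → ℝ} (hd : ∀ i, |d i - 1| ≤ β) (v : Fin n → ℝ) :
    euclNorm ((diagonal d * gradProj (B * diagonal d) * diagonal d - gradProj B) *ᵥ v)
      ≤ 3 * β * euclNorm (gradProj B *ᵥ v) := by
  have hd0 : ∀ i, d i ≠ 0 := fun i => by linarith [(abs_le.mp (hd i)).1]
  have hC : (B * diagonal d).rank = m := (rank_mul_diagonal B hd0).trans hB
  have hβ1 : 0 < 1 + β := by linarith
  have hdiag : ∀ i, |d i| ≤ 1 + β := fun i => by
    obtain ⟨hlo, hhi⟩ := abs_le.mp (hd i)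
    exact abs_le.mpr ⟨by linarith, by linarith⟩
  set Q := gradProj (B * diagonal d)
  set z := diagonal (d - d⁻¹) *ᵥ (gradProj B *ᵥ v)
  rw [diagonal_gradProj_diagonal_sub_gradProj_mulVec (isUnit_det_mul_transpose hB)
    (isUnit_det_mul_transpose hC) hd0]
  calc euclNorm (diagonal d *ᵥ (Q *ᵥ z)) ≤ (1 + β) * euclNorm (Q *ᵥ z) :=
        euclNorm_diagonal_mulVec_le hβ1.le hdiag _
    _ ≤ (1 + β) * euclNorm z := by
        gcongr
        exact euclNorm_mulVec_le_of_isSymm (isSymm_gradProj _)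
          (isIdempotentElem_gradProj (isUnit_det_mul_transpose hC)) z
    _ ≤ (1 + β) * (3 * β / (1 + β) * euclNorm (gradProj B *ᵥ v)) := by
        gcongr
        exact euclNorm_diagonal_mulVec_le (by positivity) (fun i => abs_sub_inv_le hβ (hd i)) _
    _ = 3 * β * euclNorm (gradProj B *ᵥ v) := by field_simp

/-- the shifted scaling theorem. -/
theorem stmt_7 {m n : ℕ} (A : Matrix (Fin m) (Fin n) ℝ)
    (hrank : A.rank = m)
    (x : Fin n → ℝ) (hx : ∀ i, 0 < x i)
    (β : ℝ) (hβ : β ≤ 1 / 4)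
    (Δx : Fin n → ℝ)
    (hΔx : euclNorm ((Matrix.diagonal x)⁻¹ *ᵥ Δx) ≤ β) :
    ∀ v : Fin n → ℝ,
      euclNorm (((Matrix.diagonal x)⁻¹ * Matrix.diagonal (x + Δx) *
            gradProj (A * Matrix.diagonal (x + Δx)) *
            ((Matrix.diagonal x)⁻¹ * Matrix.diagonal (x + Δx))
          - gradProj (A * Matrix.diagonal x)) *ᵥ v)
        ≤ 3 * β * euclNorm (gradProj (A * Matrix.diagonal x) *ᵥ v) := by
  intro v
  have hx0 : ∀ i, x i ≠ 0 := fun i => (hx i).ne'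
  have hXunit : IsUnit (diagonal x).det := by
    rw [det_diagonal, isUnit_iff_ne_zero]
    exact Finset.prod_ne_zero_iff.mpr fun i _ => hx0 i
  have hXinv : (diagonal x)⁻¹ = diagonal x⁻¹ := inv_eq_right_inv <| by
    rw [diagonal_mul_diagonal, ← diagonal_one]
    exact congrArg _ (funext fun i => mul_inv_cancel₀ (hx0 i))
  set δ := (diagonal x)⁻¹ *ᵥ Δx with hδ
  have hW : diagonal (x + Δx) = diagonal x * diagonal (1 + δ) := by
    rw [diagonal_mul_diagonal, hδ, hXinv]
    exact congrArg _ (funext fun i => by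
      simp only [Pi.add_apply, Pi.one_apply, mulVec_diagonal, Pi.inv_apply]
      field_simp [hx0 i])
  have hD : (diagonal x)⁻¹ * diagonal (x + Δx) = diagonal (1 + δ) := by
    rw [hW, ← Matrix.mul_assoc, nonsing_inv_mul _ hXunit, Matrix.one_mul]
  rw [hD, hW, ← Matrix.mul_assoc A]
  refine euclNorm_diagonal_gradProj_diagonal_sub_gradProj_mulVec_le
    ((rank_mul_diagonal A hx0).trans hrank) ((euclNorm_nonneg _).trans hΔx) hβ (fun i => ?_) v
  simpa using (abs_le_euclNorm δ i).trans hΔx
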